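/- arXiv:1002.2237 — 6 statements merged into one kernel-verified Lean document; each statement's English description precedes it below -/
import Mathlib

section
/- Let A₀, A₁, …, A_{n−1} be N×N matrices, each equal to either A_L or A_R, where A_L and A_R are identical in their last N−1 columns. Define M = A_{n−1}⋯A₁A₀ and P = I + A_{n−1} + A_{n−1}A_{n−2} + ⋯ + A_{n−1}⋯A₁. Then the matrices P·(I−A₀) and I−M differ at most in their first columns; equivalently, P·(I−A₀)·eⱼ = (I−M)·eⱼ for all j ≥ 2. -/
open Matrix

/-- `M_S = A_{S_{n−1}} ⋯ A_{S_1} A_{S_0}`. -/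
def wordProd {N n : ℕ} (A : Bool → Matrix (Fin N) (Fin N) ℝ)
    (S : Fin n → Bool) : Matrix (Fin N) (Fin N) ℝ :=
  ((List.ofFn fun i => A (S i)).reverse).prod

/-- `P_S = I + A_{S_{n−1}} + A_{S_{n−1}}A_{S_{n−2}} + ⋯ + A_{S_{n−1}}⋯A_{S_1}`. -/
def wordP {N n : ℕ} (A : Bool → Matrix (Fin N) (Fin N) ℝ)
    (S : Fin n → Bool) : Matrix (Fin N) (Fin N) ℝ :=
  ∑ k ∈ Finset.range n, (((List.ofFn fun i => A (S i)).reverse).take k).prod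

/-! Writing `L = [A_{n−1}, …, A_0]` and `Pₖ` for the product of its first `k` entries,
`P = ∑_{k<n} Pₖ` and `P_{k+1} = Pₖ L[k]`, so `P(I − B) = I − M` telescopes as soon as
`Pₖ B = Pₖ L[k]` for every `k`. In column `j` this holds whenever `B` and every `L[k]`
share column `j`, since column `j` of `X Y` depends only on column `j` of `Y`. -/

theorem List.sum_range_prod_take_sub {M : Type*} [Ring M] (L : List M) :
    ∑ k ∈ Finset.range L.length, ((L.take k).prod - (L.take (k + 1)).prod) = 1 - L.prod := by
  rw [Finset.sum_range_sub']
  simp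

theorem Matrix.mul_apply_eq_of_col_eq {l m n R : Type*} [Fintype m] [NonUnitalNonAssocSemiring R]
    (M : Matrix l m R) {X Y : Matrix m n R} {j : n} (h : ∀ k, X k j = Y k j) (i : l) :
    (M * X) i j = (M * Y) i j := by
  simp only [mul_apply, h]

theorem Matrix.sum_prod_take_mul_one_sub_apply {ι R : Type*} [Fintype ι] [DecidableEq ι] [Ring R]
    (L : List (Matrix ι ι R)) (B : Matrix ι ι R)
    {j : ι} (hB : ∀ X ∈ L, ∀ m, X m j = B m j) (i : ι) :
    ((∑ k ∈ Finset.range L.length, (L.take k).prod) * (1 - B)) i j = (1 - L.prod) i j := by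
  have step : ∀ k < L.length, ((L.take k).prod * B) i j = (L.take (k + 1)).prod i j := by
    intro k hk
    rw [List.prod_take_succ L k hk,
      mul_apply_eq_of_col_eq _ (fun m => (hB _ (L.getElem_mem hk) m).symm)]
  rw [← L.sum_range_prod_take_sub, Finset.sum_mul, sum_apply, sum_apply]
  refine Finset.sum_congr rfl fun k hk => ?_
  rw [mul_sub, mul_one, sub_apply, sub_apply, step k (Finset.mem_range.mp hk)]

/-- With each `Aᵢ ∈ {A_L, A_R}` (symbols `true = L`, `false = R`),
`A_L, A_R` agreeing in their last `N−1` columns, the matrices `P·(I−A₀)` and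
`I−M` agree in all columns except possibly the first. -/
theorem wordP_mul_sub_eq_cols {N n : ℕ} [NeZero N] [NeZero n]
    (AL AR : Matrix (Fin N) (Fin N) ℝ)
    (hcol : ∀ j : Fin N, j ≠ 0 → ∀ i : Fin N, AL i j = AR i j)
    (S : Fin n → Bool) (A : Bool → Matrix (Fin N) (Fin N) ℝ)
    (hA : A = fun s => if s then AL else AR) :
    ∀ j : Fin N, j ≠ 0 → ∀ i : Fin N,
      (wordP A S * (1 - A (S 0))) i j = (1 - wordProd A S) i j := by
  intro j hj i
  have hcolA : ∀ s t : Bool, ∀ m, A s m j = A t m j := by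
    subst hA
    intro s t m
    cases s <;> cases t <;> simp [hcol j hj m]
  have key := sum_prod_take_mul_one_sub_apply (List.ofFn fun i => A (S i)).reverse (A (S 0))
    (fun X hX m => by
      obtain ⟨k, rfl⟩ := List.mem_ofFn.mp (List.mem_reverse.mp hX)
      exact hcolA _ _ m) i
  simpa only [wordP, wordProd, List.length_reverse, List.length_ofFn] using key
end

section
/- With M and P as in the previous setting (M = A_{n−1}⋯A₀, P = I + A_{n−1} + ⋯ + A_{n−1}⋯A₁, each Aᵢ ∈ {A_L, A_R} with A_L, A_R agreeing in their last N−1 columns), let ϱ_Sᵀ = e₁ᵀ·adj(I−M) and ϱᵀ = e₁ᵀ·adj(I−A₀). Then ϱ_Sᵀ·P = det(P)·ϱᵀ. -/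
open Matrix

/-!
Write `L_k = A_{n−1} ⋯ A_{n−k}` for the partial products, so that `P = ∑_{k<n} L_k` and
`L_n = M`. Since `A_{n−1−k}` and `A₀` have the same columns away from column `0`,
`L_k A₀` and `L_{k+1}` agree there, and `P (I − A₀) = ∑ (L_k − L_k A₀)` telescopes to `I − M`
on those columns. Row `0` of an adjugate only sees the columns other than `0`, hence
`e₁ᵀ adj(I − M) = e₁ᵀ adj(P (I − A₀)) = e₁ᵀ adj(I − A₀) adj(P)`, and multiplying by `P` on the
right turns `adj(P)` into `det(P)`.
-/

namespace Matrix

variable {m R : Type*} [Fintype m] [DecidableEq m]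

section CommRing

variable [CommRing R]

theorem adjugate_row_eq_of_forall_col_ne {X Y : Matrix m m R} {c : m}
    (h : ∀ j ≠ c, ∀ i, X i j = Y i j) : adjugate X c = adjugate Y c := by
  funext j
  have hT : Xᵀ.updateRow c (Pi.single j 1) = Yᵀ.updateRow c (Pi.single j 1) := by
    ext a b
    by_cases ha : a = c
    · simp [ha]
    · simp [updateRow_ne ha, h a ha]
  rw [← transpose_apply (adjugate X), ← transpose_apply (adjugate Y), adjugate_transpose,
    adjugate_transpose, adjugate_apply, adjugate_apply, hT]

theorem adjugate_mul_apply_vecMul (Q X : Matrix m m R) (c : m) :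
    adjugate (Q * X) c ᵥ* Q = Q.det • adjugate X c := by
  rw [adjugate_mul_distrib, mul_apply_eq_vecMul, vecMul_vecMul, adjugate_mul, vecMul_smul,
    vecMul_one]

end CommRing

theorem sum_prod_take_mul_one_sub_apply_s3 [Ring R] {L : List (Matrix m m R)} {B : Matrix m m R}
    {j : m} (hL : ∀ X ∈ L, ∀ i, X i j = B i j) (i : m) :
    ((∑ k ∈ Finset.range L.length, (L.take k).prod) * (1 - B)) i j = (1 - L.prod) i j := by
  have hstep : ∀ k < L.length, ((L.take k).prod * B) i j = (L.take (k + 1)).prod i j := by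
    intro k hk
    rw [L.prod_take_succ k hk]
    simp only [mul_apply, hL _ (L.getElem_mem hk)]
  calc ((∑ k ∈ Finset.range L.length, (L.take k).prod) * (1 - B)) i j
      = ∑ k ∈ Finset.range L.length, ((L.take k).prod i j - (L.take (k + 1)).prod i j) := by
        rw [Finset.sum_mul, sum_apply]
        refine Finset.sum_congr rfl fun k hk => ?_
        rw [mul_sub, mul_one, sub_apply, hstep k (Finset.mem_range.mp hk)]
    _ = (1 - L.prod) i j := by
        rw [Finset.sum_range_sub' (fun k => (L.take k).prod i j), List.take_zero, List.take_length,
          List.prod_nil, sub_apply]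

end Matrix

/-- With `ϱ_Sᵀ = e₁ᵀ·adj(I−M_S)` and `ϱᵀ = e₁ᵀ·adj(I−A_{S_0})`,
one has `ϱ_Sᵀ·P_S = det(P_S)·ϱᵀ`. -/
theorem rhoS_vecMul_wordP {N n : ℕ} [NeZero N] [NeZero n]
    (AL AR : Matrix (Fin N) (Fin N) ℝ)
    (hcol : ∀ j : Fin N, j ≠ 0 → ∀ i : Fin N, AL i j = AR i j)
    (S : Fin n → Bool) (A : Bool → Matrix (Fin N) (Fin N) ℝ)
    (hA : A = fun s => if s then AL else AR) :
    Matrix.vecMul ((Matrix.adjugate (1 - wordProd A S)) 0) (wordP A S)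
      = (wordP A S).det • (Matrix.adjugate (1 - A (S 0))) 0 := by
  have hA_col : ∀ s t : Bool, ∀ j ≠ 0, ∀ i, A s i j = A t i j := by
    subst hA
    intro s t j hj i
    cases s <;> cases t <;> simp [hcol j hj i]
  set L := (List.ofFn fun i => A (S i)).reverse
  have hP : wordP A S = ∑ k ∈ Finset.range L.length, (L.take k).prod := by simp [wordP, L]
  have hP_mul : ∀ j ≠ 0, ∀ i, (wordP A S * (1 - A (S 0))) i j = (1 - wordProd A S) i j := by
    intro j hj
    rw [hP]
    refine sum_prod_take_mul_one_sub_apply_s3 fun X hX => ?_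
    obtain ⟨k, rfl⟩ := List.mem_ofFn.mp (List.mem_reverse.mp hX)
    exact hA_col _ _ j hj
  rw [adjugate_row_eq_of_forall_col_ne fun j hj i => (hP_mul j hj i).symm,
    adjugate_mul_apply_vecMul]
end

section
/- Consider the piecewise-linear continuous map f(x) = μ b + A_L x for e₁ᵀx ≤ 0 and f(x) = μ b + A_R x for e₁ᵀx ≥ 0, where A_L and A_R agree in their last N−1 columns, μ ≠ 0, and ϱᵀb ≠ 0 with ϱᵀ = e₁ᵀ adj(I−A_L). Fix a finite symbol word S ∈ {L,R}ⁿ and let f^S be the composition f^{S_{n−1}}∘⋯∘f^{S_0} of the corresponding affine half-maps, M_S the product of the corresponding matrices and P_S = I + A_{S_{n−1}} + ⋯ + A_{S_{n−1}}⋯A_{S_1}. If I−M_S is invertible, then the unique fixed point x* of f^S, namely x* = (I−M_S)^{−1} P_S b μ, satisfies e₁ᵀx* = 0 if and only if det(P_S) = 0. -/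
open Matrix

/-- `f^S = f^{S_{n−1}} ∘ ⋯ ∘ f^{S_0}` where `f^{S_i}(x) = μ b + A_{S_i} x`. -/
def affIter {N n : ℕ} (A : Bool → Matrix (Fin N) (Fin N) ℝ)
    (b : Fin N → ℝ) (μ : ℝ) (S : Fin n → Bool) (x : Fin N → ℝ) : Fin N → ℝ :=
  Fin.foldl n (fun y i => μ • b + (A (S i)).mulVec y) x

/-- Row 0 of the adjugate only depends on the columns other than column 0. -/
lemma adj_row_zero_congr {N : ℕ} [NeZero N] (A B : Matrix (Fin N) (Fin N) ℝ)
    (h : ∀ i j, j ≠ (0 : Fin N) → A i j = B i j) :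
    adjugate A 0 = adjugate B 0 := by
  funext j
  rw [adjugate_apply, adjugate_apply]
  set CA := A.updateRow j (Pi.single (0 : Fin N) 1) with hCA
  set CB := B.updateRow j (Pi.single (0 : Fin N) 1) with hCB
  have hset : CA = CB.updateCol 0 (fun i => CA i 0) := by
    funext i k
    rw [updateCol_apply]
    by_cases hk : k = 0
    · rw [if_pos hk, hk]
    · rw [if_neg hk]
      by_cases hi : i = j
      · subst hi
        simp [CA, CB, Matrix.updateRow_self]
      · rw [show CA i k = A i k from congrFun (Matrix.updateRow_ne hi) k,
          show CB i k = B i k from congrFun (Matrix.updateRow_ne hi) k]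
        exact h i k hk
  have hdecomp : (fun i => CA i 0) =
      (fun i => CB i 0) + (fun i => if i = j then 0 else A i 0 - B i 0) := by
    funext i
    by_cases hi : i = j
    · subst hi
      simp [CA, CB, Matrix.updateRow_self]
    · simp only [Pi.add_apply, if_neg hi,
        show CA i 0 = A i 0 from congrFun (Matrix.updateRow_ne hi) 0,
        show CB i 0 = B i 0 from congrFun (Matrix.updateRow_ne hi) 0]
      ring
  rw [hset, hdecomp, det_updateCol_add, updateCol_eq_self]
  have hzero : (CB.updateCol 0 (fun i => if i = j then 0 else A i 0 - B i 0)).det = 0 := by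
    apply det_eq_zero_of_row_eq_zero j
    intro k
    rw [updateCol_apply]
    by_cases hk : k = 0
    · rw [if_pos hk]; simp
    · rw [if_neg hk]
      simp [CB, Matrix.updateRow_self, Pi.single_apply, hk]
  rw [hzero, add_zero]

lemma wordProd_succ {N n : ℕ} (A : Bool → Matrix (Fin N) (Fin N) ℝ)
    (S : Fin (n + 1) → Bool) :
    wordProd A S = wordProd A (S ∘ Fin.succ) * A (S 0) := by
  unfold wordProd
  rw [List.ofFn_succ, List.reverse_cons, List.prod_append, List.prod_singleton]
  rfl

lemma wordP_succ {N n : ℕ} (A : Bool → Matrix (Fin N) (Fin N) ℝ)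
    (S : Fin (n + 1) → Bool) :
    wordP A S = wordP A (S ∘ Fin.succ) + wordProd A (S ∘ Fin.succ) := by
  unfold wordP wordProd
  simp only [Function.comp_apply]
  rw [List.ofFn_succ, List.reverse_cons, Finset.sum_range_succ]
  have hlen : ((List.ofFn fun i : Fin n => A (S i.succ)).reverse).length = n := by
    simp
  congr 1
  · apply Finset.sum_congr rfl
    intro k hk
    have hk' : k ≤ n := le_of_lt (Finset.mem_range.mp hk)
    rw [List.take_append_of_le_length (le_of_le_of_eq hk' hlen.symm)]
  · rw [List.take_append_of_le_length (le_of_eq hlen.symm)]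
    rw [List.take_of_length_le (le_of_eq hlen)]

lemma affIter_eq {N : ℕ} (A : Bool → Matrix (Fin N) (Fin N) ℝ)
    (b : Fin N → ℝ) (μ : ℝ) :
    ∀ (n : ℕ) (S : Fin n → Bool) (x : Fin N → ℝ),
      affIter A b μ S x = μ • ((wordP A S).mulVec b) + (wordProd A S).mulVec x := by
  intro n
  induction n with
  | zero =>
      intro S x
      simp [affIter, wordP, wordProd]
  | succ m ih =>
      intro S x
      have step : affIter A b μ S x
          = affIter A b μ (S ∘ Fin.succ) (μ • b + (A (S 0)).mulVec x) := by
        unfold affIter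
        rw [Fin.foldl_succ]
        rfl
      rw [step, ih, wordP_succ, wordProd_succ]
      rw [mulVec_add, mulVec_smul, add_mulVec, ← mulVec_mulVec]
      module

/-- In the piecewise-linear setting, if `I − M_S` is invertible,
the unique fixed point `x* = (I−M_S)⁻¹ P_S b μ` of `f^S` lies on the switching
manifold (`e₁ᵀx* = 0`) if and only if `det P_S = 0`. -/
theorem fixed_point_on_manifold_iff_det_P_zero {N n : ℕ} [NeZero N] [NeZero n]
    (AL AR : Matrix (Fin N) (Fin N) ℝ)
    (hcol : ∀ j : Fin N, j ≠ 0 → ∀ i : Fin N, AL i j = AR i j)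
    (b : Fin N → ℝ) (μ : ℝ) (hμ : μ ≠ 0)
    (hrhob : ((Matrix.adjugate (1 - AL)) 0) ⬝ᵥ b ≠ 0)
    (S : Fin n → Bool) (A : Bool → Matrix (Fin N) (Fin N) ℝ)
    (hA : A = fun s => if s then AL else AR)
    (hM : IsUnit (1 - wordProd A S)) :
    ∀ x : Fin N → ℝ,
      x = μ • ((1 - wordProd A S)⁻¹.mulVec ((wordP A S).mulVec b)) →
      (affIter A b μ S x = x ∧ (∀ y, affIter A b μ S y = y → y = x) ∧
        (x 0 = 0 ↔ (wordP A S).det = 0)) := by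
  intro x hx
  have hAcol : ∀ (s : Bool) (i j : Fin N), j ≠ 0 → A s i j = AL i j := by
    intro s i j hj
    subst hA
    cases s with
    | true => simp
    | false => simp [(hcol j hj i).symm]
  -- telescoping identity off column 0
  have key : ∀ (m : ℕ) (T : Fin m → Bool) (i j : Fin N), j ≠ 0 →
      (1 - wordProd A T) i j = (wordP A T * (1 - AL)) i j := by
    intro m
    induction m with
    | zero =>
        intro T i j hj
        simp [wordProd, wordP]
    | succ k ih =>
        intro T i j hj
        rw [wordProd_succ, wordP_succ, add_mul]
        have h1 : (wordProd A (T ∘ Fin.succ) * A (T 0)) i j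
            = (wordProd A (T ∘ Fin.succ) * AL) i j := by
          rw [mul_apply, mul_apply]
          exact Finset.sum_congr rfl fun l _ => by rw [hAcol (T 0) l j hj]
        have h2 := ih (T ∘ Fin.succ) i j hj
        simp only [Matrix.sub_apply, Matrix.add_apply, Matrix.mul_sub, Matrix.mul_one] at *
        rw [h1]
        linarith [h2]
  have hdetM : IsUnit (1 - wordProd A S).det := (isUnit_iff_isUnit_det _).mp hM
  set M := wordProd A S with hMdef
  set P := wordP A S with hPdef
  -- row-zero adjugate identity
  have hrowP : (adjugate (1 - M) 0) ᵥ* P = P.det • adjugate (1 - AL) 0 := by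
    have hadj : adjugate (1 - M) 0 = adjugate (P * (1 - AL)) 0 :=
      adj_row_zero_congr (1 - M) (P * (1 - AL)) (fun i j hj => key n S i j hj)
    have h0 : adjugate (1 - M) 0 = (adjugate (1 - AL) 0) ᵥ* adjugate P := by
      rw [hadj, adjugate_mul_distrib]
      funext j; rw [mul_apply]; rfl
    rw [h0, vecMul_vecMul, adjugate_mul]
    funext j
    simp [vecMul, dotProduct, Matrix.smul_apply, Matrix.one_apply, mul_ite, mul_comm]
  -- the fixed point equation
  have haff : ∀ y, affIter A b μ S y = μ • (P.mulVec b) + M.mulVec y := by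
    intro y; exact affIter_eq A b μ n S y
  have hfix : (1 - M).mulVec x = μ • (P.mulVec b) := by
    rw [hx, mulVec_smul, mulVec_mulVec, mul_nonsing_inv _ hdetM, one_mulVec]
  have hfixed : affIter A b μ S x = x := by
    rw [haff, ← hfix, sub_mulVec, one_mulVec]
    abel
  refine ⟨hfixed, ?_, ?_⟩
  · intro y hy
    rw [haff] at hy
    have h1 : (1 - M).mulVec y = μ • (P.mulVec b) := by
      rw [sub_mulVec, one_mulVec, sub_eq_iff_eq_add]
      exact hy.symm
    have h2 : (1 - M).mulVec y = (1 - M).mulVec x := by rw [h1, hfix]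
    have h3 : ((1 - M)⁻¹).mulVec ((1 - M).mulVec y)
        = ((1 - M)⁻¹).mulVec ((1 - M).mulVec x) := by rw [h2]
    rwa [mulVec_mulVec, mulVec_mulVec, nonsing_inv_mul _ hdetM, one_mulVec, one_mulVec] at h3
  · -- compute x 0
    have hx0 : x 0 = μ * (Ring.inverse (1 - M).det * (P.det * ((adjugate (1 - AL) 0) ⬝ᵥ b))) := by
      rw [hx]
      simp only [Pi.smul_apply, smul_eq_mul]
      congr 1
      rw [inv_def, smul_mulVec]
      simp only [Pi.smul_apply, smul_eq_mul]
      congr 1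
      have : (adjugate (1 - M)).mulVec (P.mulVec b) 0
          = (adjugate (1 - M) 0) ⬝ᵥ (P.mulVec b) := rfl
      rw [this, dotProduct_mulVec, hrowP, smul_dotProduct]
      rfl
    have hdetne : (1 - M).det ≠ 0 := by
      exact hdetM.ne_zero
    have hinvne : Ring.inverse (1 - M).det ≠ 0 := by
      rw [Ring.inverse_eq_inv']; exact inv_ne_zero hdetne
    rw [hx0]
    constructor
    · intro h
      rcases mul_eq_zero.mp h with h' | h'
      · exact absurd h' hμ
      rcases mul_eq_zero.mp h' with h'' | h''
      · exact absurd h'' hinvne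
      rcases mul_eq_zero.mp h'' with h3 | h3
      · exact h3
      · exact absurd h3 hrhob
    · intro h; rw [h]; ring
end

section
/- Let m, n ∈ ℕ with gcd(m,n) = 1, 2 ≤ l ≤ n−2, and let d = m^{−1} mod n. Let S = S[m/n, l/n] be the rotational symbol sequence (period n, S_i = L iff (i·m mod n)/n < l/n). Then the sequence obtained by first cyclically shifting S left by (l−1)d positions and then flipping the symbol at index 0 equals the sequence obtained by first flipping the symbol of S at index 0 and then cyclically shifting left by ld positions. (Equation (2.1) of the paper: S^{((l−1)d)‾0} = S^{‾0 (ld)}.) -/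
/-- The rotational symbol sequence `S[α,β]`, `true = L`, `false = R`. -/
noncomputable def rotSeq (α β : ℝ) : ℤ → Bool :=
  fun i => if Int.fract ((i : ℝ) * α) < β then true else false

/-- Left cyclic shift by `k`: `(S^{(k)})_i = S_{i+k}`. -/
def shiftSeq (k : ℤ) (S : ℤ → Bool) : ℤ → Bool := fun i => S (i + k)

/-- Flip of an `n`-periodic sequence at index `j` (and all its copies mod `n`). -/
def flipSeq (n : ℕ) (j : ℤ) (S : ℤ → Bool) : ℤ → Bool :=
  fun i => if (i - j) % (n : ℤ) = 0 then !(S i) else S i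

lemma rotSeq_eq (m n l : ℕ) (hn : 0 < n) (j : ℤ) :
    rotSeq ((m:ℝ)/n) ((l:ℝ)/n) j = decide ((j * m) % n < (l:ℤ)) := by
  have hn' : (0:ℝ) < n := by exact_mod_cast hn
  unfold rotSeq
  have h1 : (j:ℝ) * ((m:ℝ)/n) = ((j * m : ℤ):ℝ) / n := by push_cast; ring
  have h2 : Int.fract ((j:ℝ) * ((m:ℝ)/n)) = (((j*m) % n : ℤ):ℝ)/n := by
    rw [h1, Int.fract_div_intCast_eq_div_intCast_mod]
  by_cases h : (j * m) % n < (l:ℤ)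
  · have hr : Int.fract ((j:ℝ) * ((m:ℝ)/n)) < (l:ℝ)/n := by
      rw [h2, div_lt_div_iff_of_pos_right hn']
      exact_mod_cast h
    simp [hr, h]
  · have hr : ¬ Int.fract ((j:ℝ) * ((m:ℝ)/n)) < (l:ℝ)/n := by
      rw [h2, div_lt_div_iff_of_pos_right hn']
      intro hc; exact h (by exact_mod_cast hc)
    simp [hr, h]


/-- For `S = S[m/n, l/n]` with `gcd(m,n)=1`, `2 ≤ l ≤ n−2` and
`d = m⁻¹ mod n`: shifting left by `(l−1)d` and then flipping the symbol at
index `0` gives the same sequence as flipping at index `0` first and then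
shifting left by `ld` (equation (2.1) of the paper). -/
theorem rotSeq_shift_flip_comm (m n l d : ℕ) (hn : 0 < n)
    (hco : Nat.Coprime m n) (hl1 : 2 ≤ l) (hl2 : l ≤ n - 2)
    (hd : (m * d) % n = 1) :
    flipSeq n 0 (shiftSeq (((l - 1) * d : ℕ) : ℤ) (rotSeq ((m : ℝ) / n) ((l : ℝ) / n)))
      = shiftSeq ((l * d : ℕ) : ℤ) (flipSeq n 0 (rotSeq ((m : ℝ) / n) ((l : ℝ) / n))) := by
  have hn4 : 4 ≤ n := by omega
  have hln : l + 2 ≤ n := by omega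
  have hlnZ : (l:ℤ) + 2 ≤ n := by exact_mod_cast hln
  have hl1Z : (2:ℤ) ≤ l := by exact_mod_cast hl1
  have hnZ : (0:ℤ) < n := by exact_mod_cast hn
  funext i
  simp only [flipSeq, shiftSeq, sub_zero, rotSeq_eq m n l hn]
  obtain ⟨q, hq⟩ : ∃ q : ℤ, (m:ℤ) * d = n * q + 1 := by
    refine ⟨((m*d)/n : ℕ), ?_⟩
    have h1 := Nat.div_add_mod (m*d) n
    have : m * d = n * (m*d/n) + 1 := by omega
    exact_mod_cast this
  have hshift : ∀ k : ℕ, ((i + (k*d : ℕ)) * m) % n = ((i*m) + k) % n := by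
    intro k
    have h3 : (i + (k*d : ℕ)) * (m:ℤ) = (i*m + k) + n * (k*q) := by
      push_cast
      have h4 : (i + k*d) * (m:ℤ) = i*m + k*((m:ℤ)*d) := by ring
      rw [h4, hq]; ring
    rw [h3, Int.add_mul_emod_self_left]
  set A := (i*m) % (n:ℤ) with hA
  have hA0 : 0 ≤ A := Int.emod_nonneg _ (by positivity)
  have hAn : A < n := Int.emod_lt_of_pos _ hnZ
  have hcop : IsCoprime (n:ℤ) (m:ℤ) := by
    rw [Int.isCoprime_iff_gcd_eq_one]
    exact_mod_cast hco.symm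
  have hlink : ∀ j : ℤ, (j % n = 0 ↔ (j * m) % n = 0) := by
    intro j
    constructor
    · intro h
      exact Int.emod_eq_zero_of_dvd ((Int.dvd_of_emod_eq_zero h).mul_right m)
    · intro h
      exact Int.emod_eq_zero_of_dvd (hcop.dvd_of_dvd_mul_right (Int.dvd_of_emod_eq_zero h))
  have hBdef : ((i + (l*d : ℕ)) * m) % n = (A + l) % n := by
    rw [hshift l, hA, Int.emod_add_emod]
  have hlcast : ((l-1:ℕ):ℤ) = (l:ℤ) - 1 := by omega
  have hB'def : ((i + ((l-1)*d : ℕ)) * m) % n = (A + ((l:ℤ)-1)) % n := by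
    rw [hshift (l-1), hA, Int.emod_add_emod, hlcast]
  by_cases hi : i % (n:ℤ) = 0
  · have hA0' : A = 0 := hA ▸ (hlink i).mp hi
    have hBne : (i + (l*d : ℕ)) % (n:ℤ) ≠ 0 := by
      intro h
      have h5 := (hlink _).mp h
      rw [hBdef, hA0', zero_add, Int.emod_eq_of_lt (by omega) (by omega)] at h5
      omega
    rw [if_pos hi, if_neg hBne, hBdef, hB'def, hA0', zero_add, zero_add,
      Int.emod_eq_of_lt (by omega) (by omega), Int.emod_eq_of_lt (by omega) (by omega)]
    simp only [← decide_not, decide_eq_decide]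
    omega
  · have hAne : A ≠ 0 := fun h => hi ((hlink i).mpr (hA ▸ h))
    rw [if_neg hi]
    by_cases hj : (i + (l*d : ℕ)) % (n:ℤ) = 0
    · -- A + l = n
      have h6 : (A + (l:ℤ)) % n = 0 := hBdef ▸ (hlink _).mp hj
      obtain ⟨c, hc⟩ := Int.dvd_of_emod_eq_zero h6
      have hc1 : c = 1 := by nlinarith
      rw [hc1, mul_one] at hc
      rw [if_pos hj, hBdef, hB'def, h6,
        show (A + ((l:ℤ)-1)) % n = n - 1 by
          rw [show A + ((l:ℤ)-1) = n - 1 by omega, Int.emod_eq_of_lt (by omega) (by omega)]]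
      simp only [← decide_not, decide_eq_decide]
      omega
    · have h7 : (A + (l:ℤ)) % n ≠ 0 := fun h => hj ((hlink _).mpr (hBdef ▸ h))
      have hAl : A + (l:ℤ) ≠ n := fun h => h7 (by rw [h, Int.emod_self])
      rw [if_neg hj, hBdef, hB'def]
      rcases lt_or_gt_of_ne hAl with hlt | hgt
      · rw [Int.emod_eq_of_lt (by omega) (by omega),
          Int.emod_eq_of_lt (by omega) (by omega), decide_eq_decide]
        omega
      · rw [show (A + (l:ℤ)) % n = (A + l - n) % n by
            rw [show A + (l:ℤ) - n = A + l + (n:ℤ)*(-1) by ring, Int.add_mul_emod_self_left],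
          show (A + ((l:ℤ)-1)) % n = (A + (l-1) - n) % n by
            rw [show A + ((l:ℤ)-1) - n = A + (l-1) + (n:ℤ)*(-1) by ring, Int.add_mul_emod_self_left],
          Int.emod_eq_of_lt (by omega) (by omega),
          Int.emod_eq_of_lt (by omega) (by omega), decide_eq_decide]
        omega
end

section
/- With m, n coprime, 2 ≤ l ≤ n−2, d = m^{−1} mod n, and S = S[m/n, l/n] the rotational sequence: flipping both the symbol at index 0 (from L to R) and the symbol at index ld (from R to L) of S yields the cyclic shift of S left by −d positions, i.e. S^{‾0 ‾(ld)} = S^{(−d)}. -/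
lemma rotSeq_eq_mod (m n l : ℕ) (hn : 0 < n) (i : ℤ) :
    rotSeq ((m : ℝ) / n) ((l : ℝ) / n) i
      = if (i * m) % (n : ℤ) < (l : ℤ) then true else false := by
  unfold rotSeq
  have h1 : (i : ℝ) * ((m : ℝ) / n) = ((i * (m : ℕ) : ℤ) : ℝ) / (n : ℕ) := by
    push_cast; ring
  rw [h1, Int.fract_div_intCast_eq_div_intCast_mod]
  have hn' : (0 : ℝ) < (n : ℝ) := by exact_mod_cast hn
  congr 1
  rw [div_lt_div_iff_of_pos_right hn']
  norm_cast

/-- For `S = S[m/n, l/n]` with `gcd(m,n)=1`, `2 ≤ l ≤ n−2` and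
`d = m⁻¹ mod n`: flipping both the symbol at index `0` and the symbol at index
`ld` yields the cyclic shift of `S` left by `−d`: `S^{‾0 ‾(ld)} = S^{(−d)}`. -/
theorem rotSeq_double_flip_eq_shift (m n l d : ℕ) (hn : 0 < n)
    (hco : Nat.Coprime m n) (hl1 : 2 ≤ l) (hl2 : l ≤ n - 2)
    (hd : (m * d) % n = 1) :
    flipSeq n ((l * d : ℕ) : ℤ) (flipSeq n 0 (rotSeq ((m : ℝ) / n) ((l : ℝ) / n)))
      = shiftSeq (-(d : ℤ)) (rotSeq ((m : ℝ) / n) ((l : ℝ) / n)) := by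
  have hn4 : 4 ≤ n := by omega
  have hnZ : (0 : ℤ) < (n : ℤ) := by exact_mod_cast hn
  have hlZ : (2 : ℤ) ≤ (l : ℤ) := by exact_mod_cast hl1
  have hln : (l : ℤ) ≤ (n : ℤ) - 2 := by
    have : l ≤ n - 2 := hl2
    omega
  funext i
  simp only [flipSeq, shiftSeq, rotSeq_eq_mod m n l hn, sub_zero]
  set a : ℤ := (i * m) % n with ha
  have ha0 : 0 ≤ a := Int.emod_nonneg _ (by positivity)
  have ha1 : a < n := Int.emod_lt_of_pos _ hnZ
  clear_value a
  have hdm : ((d : ℤ) * m) % n = 1 := by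
    have h2 := congrArg (Nat.cast : ℕ → ℤ) hd
    push_cast at h2
    rw [show (d : ℤ) * m = (m : ℤ) * d from mul_comm _ _]
    exact h2
  -- the shifted condition
  have hshift : ((i + -(d : ℤ)) * m) % n = (a - 1) % n := by
    have h3 : (i + -(d : ℤ)) * m = i * m - d * m := by ring
    rw [h3]
    conv_lhs => rw [Int.sub_emod, ← ha, hdm]
  rw [hshift]
  -- coprimality in ℤ
  have hcoZ : IsCoprime (m : ℤ) (n : ℤ) := Int.isCoprime_iff_gcd_eq_one.mpr hco
  -- i % n = 0 ↔ a = 0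
  have hiz : (i % (n : ℤ) = 0) = (a = 0) := by
    apply propext
    constructor
    · intro h
      rw [ha, Int.mul_emod, h, zero_mul, Int.zero_emod]
    · intro h
      have hdvd : (n : ℤ) ∣ i * m := Int.dvd_of_emod_eq_zero (ha ▸ h)
      exact Int.emod_eq_zero_of_dvd (hcoZ.symm.dvd_of_dvd_mul_right hdvd)
  -- (i - ld) % n = 0 ↔ a = l
  have h1m : ((d : ℤ) * m) ≡ 1 [ZMOD (n : ℤ)] := by
    show ((d : ℤ) * m) % n = 1 % n
    rw [hdm, Int.emod_eq_of_lt (by norm_num) (by omega)]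
  have hmeq : ((i - ((l * d : ℕ) : ℤ)) * m) % n = (a - l) % n := by
    have step1 : ((i - ((l * d : ℕ) : ℤ)) * m) % n = (i * m - (l : ℤ) * ((d : ℤ) * m)) % n := by
      congr 1; push_cast; ring
    have step2 : (i * m - (l : ℤ) * ((d : ℤ) * m)) ≡ (i * m - (l : ℤ) * 1) [ZMOD (n : ℤ)] :=
      (Int.ModEq.refl (i * m)).sub (h1m.mul_left (l : ℤ))
    have haa : a % (n : ℤ) = a := Int.emod_eq_of_lt ha0 ha1
    rw [step1, step2, mul_one]
    conv_lhs => rw [Int.sub_emod, ← ha]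
    conv_rhs => rw [Int.sub_emod, haa]
  have hil : ((i - ((l * d : ℕ) : ℤ)) % (n : ℤ) = 0) = (a = l) := by
    apply propext
    constructor
    · intro h
      have hdvd : (n : ℤ) ∣ (i - ((l * d : ℕ) : ℤ)) * m :=
        (Int.dvd_of_emod_eq_zero h).mul_right _
      have h2 : (a - l) % (n : ℤ) = 0 := hmeq ▸ Int.emod_eq_zero_of_dvd hdvd
      have hdvd2 : (n : ℤ) ∣ a - l := Int.dvd_of_emod_eq_zero h2
      have h4 : a - (l : ℤ) = 0 := Int.eq_zero_of_abs_lt_dvd hdvd2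
        (by rw [abs_lt]; constructor <;> omega)
      omega
    · intro h
      have h2 : ((i - ((l * d : ℕ) : ℤ)) * m) % n = 0 := by
        rw [hmeq, h, sub_self, Int.zero_emod]
      have hdvd : (n : ℤ) ∣ (i - ((l * d : ℕ) : ℤ)) :=
        hcoZ.symm.dvd_of_dvd_mul_right (Int.dvd_of_emod_eq_zero h2)
      exact Int.emod_eq_zero_of_dvd hdvd
  have hb : (a - 1) % (n : ℤ) = if a = 0 then (n : ℤ) - 1 else a - 1 := by
    by_cases h : a = 0
    · rw [if_pos h, h, show (0 : ℤ) - 1 = ((n : ℤ) - 1) + n * (-1) by ring,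
        Int.add_mul_emod_self_left, Int.emod_eq_of_lt (by omega) (by omega)]
    · rw [if_neg h, Int.emod_eq_of_lt (by omega) (by omega)]
  simp only [hiz, hil, hb]
  split_ifs <;> simp_all <;> omega
end

section
/- Let S = S[m/n, l/n] be a rotational symbol sequence with gcd(m,n)=1 and 2 ≤ l ≤ n−2. Then the sequence Š obtained by flipping S at index 0 is the rotational sequence S[m/n, (l−1)/n] shifted left by −d, and the sequence Ŝ obtained by flipping S at index ld is the rotational sequence S[m/n, (l+1)/n], where d = m^{−1} mod n. In particular, Š has exactly l−1 symbols L per period and Ŝ has exactly l+1 symbols L per period. -/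
/-!
Put `r(i) = i m mod n`. Then `S[m/n, c/n]_i = L` iff `r(i) < c`, and since `m` is invertible
mod `n`, `i ↦ r(i)` permutes a period and `i ≡ j` iff `r(i) = r(j)`. Flipping at `0` (where
`r = 0`) leaves `L` exactly where `1 ≤ r(i) < l`; as `r(i - d) = r(i) - 1 mod n`, this is
`S[m/n, (l-1)/n]` read at `i - d`. Flipping at `l d` (where `r = l`) leaves `L` exactly where
`r(i) ≤ l`, i.e. `S[m/n, (l+1)/n]`. The counts follow by reindexing a period through `r`.
-/

open Finset

lemma Int.mul_right_modEq_iff_of_mul_modEq_one {a b c d n : ℤ} (h : c * d ≡ 1 [ZMOD n]) :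
    a * c ≡ b * c [ZMOD n] ↔ a ≡ b [ZMOD n] := by
  refine ⟨fun hab => ?_, fun hab => hab.mul_right c⟩
  calc a = a * 1 := (mul_one a).symm
    _ ≡ a * (c * d) [ZMOD n] := (Int.ModEq.refl a).mul h.symm
    _ = a * c * d := (mul_assoc ..).symm
    _ ≡ b * c * d [ZMOD n] := hab.mul_right d
    _ = b * (c * d) := mul_assoc ..
    _ ≡ b * 1 [ZMOD n] := (Int.ModEq.refl b).mul h
    _ = b := mul_one b

lemma Int.sub_one_emod_lt_sub_one_iff {r c n : ℤ} (hr0 : 0 ≤ r) (hrn : r < n) (hcn : c ≤ n) :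
    (r - 1) % n < c - 1 ↔ 1 ≤ r ∧ r < c := by
  rcases hr0.eq_or_lt with rfl | hr
  · rw [← Int.add_emod_right, Int.emod_eq_of_lt (by omega) (by omega)]
    omega
  · rw [Int.emod_eq_of_lt (by omega) (by omega)]
    omega

lemma Nat.mul_mod_eq_self_of_modEq_one {a b n : ℕ} (h : b ≡ 1 [MOD n]) (ha : a < n) :
    a * b % n = a :=
  calc a * b % n = a * 1 % n := (Nat.ModEq.refl a).mul h
    _ = a := by rw [mul_one, Nat.mod_eq_of_lt ha]

section
variable {m n d : ℕ}

lemma card_filter_range_mul_emod (hmd : m * d ≡ 1 [MOD n]) (P : ℤ → Prop) [DecidablePred P] :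
    #{i ∈ range n | P (((i : ℕ) : ℤ) * m % n)} = #{i ∈ range n | P ((i : ℕ) : ℤ)} := by
  have hdm : d * m ≡ 1 [MOD n] := by rwa [mul_comm]
  have inv {a b c : ℕ} (hbc : b * c ≡ 1 [MOD n]) (ha : a < n) : a * b % n * c % n = a := by
    rw [Nat.mod_mul_mod, mul_assoc, Nat.mul_mod_eq_self_of_modEq_one hbc ha]
  refine card_nbij' (fun i => i * m % n) (fun j => j * d % n) ?_ ?_ ?_ ?_
  · intro i hi
    simp only [coe_filter, mem_range, Set.mem_ofPred_eq] at hi ⊢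
    exact ⟨Nat.mod_lt _ (by omega), by exact_mod_cast hi.2⟩
  · intro j hj
    simp only [coe_filter, mem_range, Set.mem_ofPred_eq] at hj ⊢
    refine ⟨Nat.mod_lt _ (by omega), ?_⟩
    rw [← Nat.cast_mul, ← Int.natCast_mod, inv hdm hj.1]
    exact hj.2
  · intro i hi
    exact inv hmd (mem_range.mp (mem_filter.mp hi).1)
  · intro j hj
    exact inv hdm (mem_range.mp (mem_filter.mp hj).1)

lemma rotSeq_div_apply (hn : 0 < n) (c i : ℤ) :
    rotSeq ((m : ℝ) / n) ((c : ℝ) / n) i = decide (i * m % n < c) := by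
  have hmul : (i : ℝ) * ((m : ℝ) / n) = ((i * m : ℤ) : ℝ) / n := by push_cast; ring
  simp only [rotSeq, hmul, Int.fract_div_intCast_eq_div_intCast_mod,
    div_lt_div_iff_of_pos_right (show (0 : ℝ) < n by positivity), Int.cast_lt,
    Bool.if_false_right, Bool.and_true]

lemma rotSeq_natCast_div_apply (hn : 0 < n) (c : ℕ) (i : ℤ) :
    rotSeq ((m : ℝ) / n) ((c : ℝ) / n) i = decide (i * m % n < c) := by
  simpa only [Int.cast_natCast] using rotSeq_div_apply (m := m) hn c i

lemma card_filter_rotSeq (hn : 0 < n) (hmd : m * d ≡ 1 [MOD n]) {c : ℕ} (hc : c ≤ n) :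
    #{i ∈ range n | rotSeq ((m : ℝ) / n) ((c : ℝ) / n) (i : ℕ) = true} = c := by
  simp only [rotSeq_natCast_div_apply hn, decide_eq_true_eq]
  rw [card_filter_range_mul_emod hmd (· < (c : ℤ))]
  convert card_range c using 2
  ext i
  simp only [mem_filter, mem_range]
  omega

lemma flipSeq_rotSeq_apply (hn : 0 < n) (hmd : m * d ≡ 1 [MOD n]) (c : ℕ) (j i : ℤ) :
    flipSeq n j (rotSeq ((m : ℝ) / n) ((c : ℝ) / n)) i
      = (decide (i * m % n < c) ^^ decide (i * m % n = j * m % n)) := by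
  have hmd' : (m : ℤ) * d ≡ 1 [ZMOD n] := by exact_mod_cast Int.natCast_modEq_iff.mpr hmd
  have hflip : (i - j) % n = 0 ↔ i * m % n = j * m % n := by
    rw [← Int.emod_eq_emod_iff_emod_sub_eq_zero]
    exact (Int.mul_right_modEq_iff_of_mul_modEq_one hmd').symm
  by_cases h : (i - j) % n = 0 <;> simp [flipSeq, rotSeq_natCast_div_apply hn, h, ← hflip]

lemma flipSeq_zero_rotSeq_eq_shiftSeq (hmd : m * d ≡ 1 [MOD n]) {c : ℕ} (hc1 : 1 ≤ c)
    (hcn : c ≤ n) :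
    flipSeq n 0 (rotSeq ((m : ℝ) / n) ((c : ℝ) / n))
      = shiftSeq (-(d : ℤ)) (rotSeq ((m : ℝ) / n) (((c : ℝ) - 1) / n)) := by
  have hn : 0 < n := by omega
  have hdm : (d : ℤ) * m ≡ 1 [ZMOD n] := by
    rw [mul_comm]; exact_mod_cast Int.natCast_modEq_iff.mpr hmd
  funext i
  have hshift : (i + -d) * m % n = (i * m % n - 1) % n :=
    calc (i + -d) * m ≡ i * m - 1 [ZMOD n] := by
          rw [add_mul, neg_mul, ← sub_eq_add_neg]; exact (Int.ModEq.refl _).sub hdm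
      _ ≡ i * m % n - 1 [ZMOD n] := (Int.mod_modEq _ _).symm.sub_right 1
  have hr0 : 0 ≤ i * m % n := Int.emod_nonneg _ (by omega)
  have hrn : i * m % n < n := Int.emod_lt_of_pos _ (by omega)
  have hT := rotSeq_div_apply (m := m) hn (c - 1) (i + -d)
  push_cast at hT
  rw [flipSeq_rotSeq_apply hn hmd, shiftSeq, hT, hshift, Bool.eq_iff_iff]
  simp only [zero_mul, Int.zero_emod, Int.sub_one_emod_lt_sub_one_iff hr0 hrn (c := c) (by omega),
    bne_iff_ne, ne_eq, decide_eq_decide, decide_eq_true_eq]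
  omega

lemma flipSeq_mul_rotSeq_eq_rotSeq_add_one (hmd : m * d ≡ 1 [MOD n]) {c : ℕ} (hcn : c < n) :
    flipSeq n ((c * d : ℕ) : ℤ) (rotSeq ((m : ℝ) / n) ((c : ℝ) / n))
      = rotSeq ((m : ℝ) / n) (((c : ℝ) + 1) / n) := by
  have hn : 0 < n := by omega
  have hcdm : ((c * d : ℕ) : ℤ) * m % n = c := by
    rw [← Nat.cast_mul, ← Int.natCast_mod, mul_assoc, mul_comm d,
      Nat.mul_mod_eq_self_of_modEq_one hmd hcn]
  funext i
  have hU := rotSeq_div_apply (m := m) hn (c + 1) i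
  push_cast at hU
  rw [flipSeq_rotSeq_apply hn hmd, hcdm, hU, Bool.eq_iff_iff]
  simp only [bne_iff_ne, ne_eq, decide_eq_decide, decide_eq_true_eq]
  omega

lemma card_filter_flipSeq_zero_rotSeq (hmd : m * d ≡ 1 [MOD n]) {c : ℕ} (hc1 : 1 ≤ c)
    (hcn : c ≤ n) :
    #{i ∈ range n | flipSeq n 0 (rotSeq ((m : ℝ) / n) ((c : ℝ) / n)) (i : ℕ) = true}
      = c - 1 := by
  have hn : 0 < n := by omega
  simp only [flipSeq_rotSeq_apply hn hmd, zero_mul, Int.zero_emod]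
  rw [card_filter_range_mul_emod hmd (fun r => (decide (r < c) ^^ decide (r = 0)) = true)]
  convert Nat.card_Ico 1 c using 2
  ext i
  simp only [mem_filter, mem_range, mem_Ico, bne_iff_ne, ne_eq, decide_eq_decide]
  omega

end

theorem rotSeq_flip_identifications_general (m n l d : ℕ) (hl1 : 2 ≤ l) (hl2 : l ≤ n - 2)
    (hd : (m * d) % n = 1) :
    flipSeq n 0 (rotSeq ((m : ℝ) / n) ((l : ℝ) / n))
      = shiftSeq (-(d : ℤ)) (rotSeq ((m : ℝ) / n) (((l : ℝ) - 1) / n)) ∧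
    flipSeq n ((l * d : ℕ) : ℤ) (rotSeq ((m : ℝ) / n) ((l : ℝ) / n))
      = rotSeq ((m : ℝ) / n) (((l : ℝ) + 1) / n) ∧
    ((Finset.range n).filter
        (fun i : ℕ => flipSeq n 0 (rotSeq ((m : ℝ) / n) ((l : ℝ) / n)) ((i : ℤ)) = true)).card
      = l - 1 ∧
    ((Finset.range n).filter
        (fun i : ℕ => flipSeq n ((l * d : ℕ) : ℤ)
          (rotSeq ((m : ℝ) / n) ((l : ℝ) / n)) (i : ℤ) = true)).card
      = l + 1 := by
  have hn : 0 < n := by omega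
  have hmd : m * d ≡ 1 [MOD n] := by
    rw [Nat.ModEq, hd, Nat.mod_eq_of_lt (by omega)]
  have hflip := flipSeq_mul_rotSeq_eq_rotSeq_add_one hmd (c := l) (by omega)
  refine ⟨flipSeq_zero_rotSeq_eq_shiftSeq hmd (by omega) (by omega), hflip,
    card_filter_flipSeq_zero_rotSeq hmd (by omega) (by omega), ?_⟩
  rw [hflip]
  exact_mod_cast card_filter_rotSeq hn hmd (c := l + 1) (by omega)

/-- For `S = S[m/n, l/n]` with `gcd(m,n)=1`, `2 ≤ l ≤ n−2`,
`d = m⁻¹ mod n`: the flip `Š` of `S` at index `0` equals `S[m/n,(l−1)/n]`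
shifted left by `−d`, the flip `Ŝ` of `S` at index `ld` equals
`S[m/n,(l+1)/n]`; moreover `Š` has exactly `l−1` symbols `L` per period and
`Ŝ` has exactly `l+1` symbols `L` per period. -/
theorem rotSeq_flip_identifications (m n l d : ℕ) (hn : 0 < n)
    (hco : Nat.Coprime m n) (hl1 : 2 ≤ l) (hl2 : l ≤ n - 2)
    (hd : (m * d) % n = 1) :
    flipSeq n 0 (rotSeq ((m : ℝ) / n) ((l : ℝ) / n))
      = shiftSeq (-(d : ℤ)) (rotSeq ((m : ℝ) / n) (((l : ℝ) - 1) / n)) ∧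
    flipSeq n ((l * d : ℕ) : ℤ) (rotSeq ((m : ℝ) / n) ((l : ℝ) / n))
      = rotSeq ((m : ℝ) / n) (((l : ℝ) + 1) / n) ∧
    ((Finset.range n).filter
        (fun i : ℕ => flipSeq n 0 (rotSeq ((m : ℝ) / n) ((l : ℝ) / n)) ((i : ℤ)) = true)).card
      = l - 1 ∧
    ((Finset.range n).filter
        (fun i : ℕ => flipSeq n ((l * d : ℕ) : ℤ)
          (rotSeq ((m : ℝ) / n) ((l : ℝ) / n)) (i : ℤ) = true)).card
      = l + 1 :=
  rotSeq_flip_identifications_general m n l d hl1 hl2 hd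
end
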